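/- For every positive integer n and real d ≥ 1 such that n·d is an integer with n·d ≥ 5, one has c₃(n;d) - k₀·c₁(n;d)³ - b₀·c₁(n;d)·c₂(n;d) ≥ 0, where k₀ = -242/93 and b₀ = 515/93. -/
import Mathlib


/-- For `n` hypersurfaces all of degree `d + 1`: `s_j = n·dʲ`, `c₁(n;d) = 4 - s₁`. -/
def chernEq1 (n : ℕ) (d : ℝ) : ℝ := 4 - (n : ℝ) * d

/-- `c₂(n;d) = (s₁² + s₂)/2 - 3(s₁ - 2)` with `s_j = n·dʲ`. -/
noncomputable def chernEq2 (n : ℕ) (d : ℝ) : ℝ :=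
  (((n : ℝ) * d) ^ 2 + (n : ℝ) * d ^ 2) / 2 - 3 * ((n : ℝ) * d - 2)

/-- `c₃(n;d) = -(s₁³ + 3s₁s₂ + 2s₃)/6 + (s₁² + s₂) - 3s₁ + 4` with `s_j = n·dʲ`. -/
noncomputable def chernEq3 (n : ℕ) (d : ℝ) : ℝ :=
  -(((n : ℝ) * d) ^ 3 + 3 * ((n : ℝ) * d) * ((n : ℝ) * d ^ 2) + 2 * ((n : ℝ) * d ^ 3)) / 6
    + (((n : ℝ) * d) ^ 2 + (n : ℝ) * d ^ 2) - 3 * ((n : ℝ) * d) + 4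

theorem below_line_p1_pinfty_equal_degrees
    (n : ℕ) (hn : 0 < n) (d : ℝ) (hd : 1 ≤ d)
    (hint : ∃ N : ℤ, (n : ℝ) * d = (N : ℝ)) (h5 : 5 ≤ (n : ℝ) * d) :
    0 ≤ chernEq3 n d - (-242/93) * chernEq1 n d ^ 3
        - (515/93) * (chernEq1 n d * chernEq2 n d) := by
  have hn1 : (1:ℝ) ≤ (n:ℝ) := by exact_mod_cast hn
  set s : ℝ := (n:ℝ) * d with hs
  have hd0 : 0 < d := lt_of_lt_of_le one_pos hd
  have hds : d ≤ s := by
    calc d = 1 * d := (one_mul d).symm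
    _ ≤ (n:ℝ) * d := by nlinarith
  have e2 : (n:ℝ) * d ^ 2 = s * d := by rw [hs]; ring
  have e3 : (n:ℝ) * d ^ 3 = s * d ^ 2 := by rw [hs]; ring
  have hP1 : 0 ≤ 1266 * s^2 - 7186 * s + 7000 := by nlinarith [sq_nonneg (s-5)]
  have hPs : 0 ≤ 360 * s^3 - 1030 * s^2 - 5250 * s + 7000 := by
    nlinarith [mul_nonneg (sub_nonneg.2 h5) (sub_nonneg.2 h5), sq_nonneg s]
  have key : 0 ≤ 7000 - 5250*s - 1874*s*d - 62*s*d^2 + 844*s^2 + 422*s^2*d := by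
    have h1 : 0 ≤ (s - d) * (1266 * s^2 - 7186 * s + 7000) :=
      mul_nonneg (sub_nonneg.2 hds) hP1
    have h2 : 0 ≤ (d - 1) * (360 * s^3 - 1030 * s^2 - 5250 * s + 7000) :=
      mul_nonneg (sub_nonneg.2 hd) hPs
    have h3 : 0 ≤ 62 * s * (d - 1) * ((s - d) * (s - 1)) :=
      mul_nonneg (mul_nonneg (mul_nonneg (by linarith) (by linarith)) (by linarith))
        (mul_nonneg (by linarith) (by linarith))
    have hsum : 0 ≤ (s - 1) *
        (7000 - 5250*s - 1874*s*d - 62*s*d^2 + 844*s^2 + 422*s^2*d) := by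
      have heq : (s - 1) * (7000 - 5250*s - 1874*s*d - 62*s*d^2 + 844*s^2 + 422*s^2*d)
          = (s - d) * (1266 * s^2 - 7186 * s + 7000)
            + (d - 1) * (360 * s^3 - 1030 * s^2 - 5250 * s + 7000)
            + 62 * s * (d - 1) * ((s - d) * (s - 1)) := by ring
      rw [heq]; linarith
    have hs1 : 0 < s - 1 := by linarith
    exact nonneg_of_mul_nonneg_right hsum hs1
  simp only [chernEq3, chernEq1, chernEq2, e2, e3, ← hs]
  nlinarith [key]
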